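/- arXiv:2010.08616 — 2 statements merged into one kernel-verified Lean document; each statement's English description precedes it below -/
import Mathlib

section
/- Let V be an abelian subgroup of a finite group G, and let g ∈ G be an element normalizing V with gcd(|V|, |g|) = 1. Then the subgroup [V, g] = ⟨v⁻¹·g⁻¹vg : v ∈ V⟩ is both a left Engel sink and a right Engel sink of g in the subgroup V⟨g⟩, and it is contained in every left Engel sink and in every right Engel sink of g in V⟨g⟩ (i.e. [V, g] is the smallest left Engel sink and the smallest right Engel sink of g in V⟨g⟩). -/
/-- The Engel commutator step: `engelComm x g = [x, g] = x⁻¹ g⁻¹ x g`. -/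
def engelComm {G : Type*} [Group G] (x g : G) : G := x⁻¹ * g⁻¹ * x * g

/-- `E` is a left Engel sink of `g` with respect to the subgroup `H`. -/
def IsLeftEngelSinkIn {G : Type*} [Group G] (H : Subgroup G) (g : G) (E : Set G) : Prop :=
  ∀ x ∈ H, ∃ l₀ : ℕ, ∀ l ≥ l₀, (fun y => engelComm y g)^[l] x ∈ E

/-- `R` is a right Engel sink of `g` with respect to the subgroup `H`. -/
def IsRightEngelSinkIn {G : Type*} [Group G] (H : Subgroup G) (g : G) (R : Set G) : Prop :=
  ∀ x ∈ H, ∃ r₀ : ℕ, ∀ r ≥ r₀, (fun y => engelComm y x)^[r] g ∈ R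

theorem stmt15 (G : Type*) [Group G] [Finite G] (V : Subgroup G) (g : G)
    (hab : ∀ v ∈ V, ∀ w ∈ V, v * w = w * v)
    (hnorm : ∀ v ∈ V, g⁻¹ * v * g ∈ V)
    (hcop : Nat.Coprime (Nat.card V) (orderOf g))
    (H : Subgroup G) (hH : H = V ⊔ Subgroup.zpowers g)
    (W : Subgroup G)
    (hW : W = Subgroup.closure {x : G | ∃ v ∈ V, x = v⁻¹ * g⁻¹ * v * g}) :
    IsLeftEngelSinkIn H g (W : Set G) ∧ IsRightEngelSinkIn H g (W : Set G) ∧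
      (∀ E : Set G, IsLeftEngelSinkIn H g E → (W : Set G) ⊆ E) ∧
      (∀ R : Set G, IsRightEngelSinkIn H g R → (W : Set G) ⊆ R) := by
  classical
  -- φ preserves V
  have hφV : ∀ v ∈ V, v⁻¹ * g⁻¹ * v * g ∈ V := by
    intro v hv
    have h : v⁻¹ * g⁻¹ * v * g = v⁻¹ * (g⁻¹ * v * g) := by group
    rw [h]; exact mul_mem (inv_mem hv) (hnorm v hv)
  -- multiplicativity of φ on V
  have hmul : ∀ v ∈ V, ∀ w ∈ V,
      (v * w)⁻¹ * g⁻¹ * (v * w) * g = (v⁻¹ * g⁻¹ * v * g) * (w⁻¹ * g⁻¹ * w * g) := by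
    intro v hv w hw
    have hc : (v⁻¹ * g⁻¹ * v * g) * w⁻¹ = w⁻¹ * (v⁻¹ * g⁻¹ * v * g) :=
      hab _ (hφV v hv) _ (inv_mem hw)
    calc (v * w)⁻¹ * g⁻¹ * (v * w) * g
        = w⁻¹ * (v⁻¹ * g⁻¹ * v * g) * (g⁻¹ * w * g) := by group
      _ = (v⁻¹ * g⁻¹ * v * g) * w⁻¹ * (g⁻¹ * w * g) := by rw [← hc]
      _ = (v⁻¹ * g⁻¹ * v * g) * (w⁻¹ * g⁻¹ * w * g) := by group
  -- image of φ is a subgroup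
  have hWmem : ∀ x : G, x ∈ W ↔ ∃ v ∈ V, x = v⁻¹ * g⁻¹ * v * g := by
    let W' : Subgroup G :=
      { carrier := {x : G | ∃ v ∈ V, x = v⁻¹ * g⁻¹ * v * g}
        one_mem' := ⟨1, V.one_mem, by group⟩
        mul_mem' := by
          rintro a b ⟨v, hv, rfl⟩ ⟨w, hw, rfl⟩
          exact ⟨v * w, mul_mem hv hw, (hmul v hv w hw).symm⟩
        inv_mem' := by
          rintro a ⟨v, hv, rfl⟩
          refine ⟨v⁻¹, inv_mem hv, ?_⟩
          have h1 := hmul v hv v⁻¹ (inv_mem hv)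
          rw [mul_inv_cancel] at h1
          have h2 : (1:G)⁻¹ * g⁻¹ * 1 * g = 1 := by group
          rw [h2] at h1
          exact inv_eq_of_mul_eq_one_right h1.symm }
    have hle : W ≤ W' := by
      rw [hW]
      exact (Subgroup.closure_le W').2 (fun x hx => hx)
    intro x
    refine ⟨fun h => hle h, fun h => ?_⟩
    rw [hW]
    exact Subgroup.subset_closure h
  have hWleV : W ≤ V := by
    intro x hx
    obtain ⟨v, hv, rfl⟩ := (hWmem x).mp hx
    exact hφV v hv
  -- conjugation by g⁻¹ preserves V
  have hconj' : ∀ v ∈ V, g * v * g⁻¹ ∈ V := by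
    intro v hv
    have hsurj : Function.Surjective (fun u : ↥V => (⟨g⁻¹ * ↑u * g, hnorm _ u.2⟩ : ↥V)) := by
      apply Finite.injective_iff_surjective.mp
      intro a b hh
      have h1 : g⁻¹ * ↑a * g = g⁻¹ * ↑b * g := congrArg Subtype.val hh
      apply Subtype.ext
      have := mul_right_cancel h1
      exact mul_left_cancel this
    obtain ⟨u, hu⟩ := hsurj ⟨v, hv⟩
    have hval : g⁻¹ * ↑u * g = v := congrArg Subtype.val hu
    have h2 : g * v * g⁻¹ = ↑u := by rw [← hval]; group
    rw [h2]; exact u.2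
  -- conjugation by zpowers of g preserves V
  have hVz : ∀ (k : ℤ), ∀ v ∈ V, (g ^ k)⁻¹ * v * g ^ k ∈ V := by
    intro k
    induction k using Int.induction_on with
    | zero => intro v hv; simpa using hv
    | succ i ih =>
      intro v hv
      have heq : (g ^ ((i:ℤ)+1))⁻¹ * v * g ^ ((i:ℤ)+1)
          = g⁻¹ * ((g ^ (i:ℤ))⁻¹ * v * g ^ (i:ℤ)) * g := by
        rw [zpow_add_one]; group
      rw [heq]; exact hnorm _ (ih v hv)
    | pred i ih =>
      intro v hv
      have heq : (g ^ (-(i:ℤ)-1))⁻¹ * v * g ^ (-(i:ℤ)-1)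
          = g * ((g ^ (-(i:ℤ)))⁻¹ * v * g ^ (-(i:ℤ))) * g⁻¹ := by
        rw [zpow_sub_one]; group
      rw [heq]; exact hconj' _ (ih v hv)
  -- conjugation by g, g⁻¹, zpowers preserves W
  have hconjWg : ∀ x ∈ W, g⁻¹ * x * g ∈ W := by
    intro x hx
    obtain ⟨v, hv, rfl⟩ := (hWmem x).mp hx
    refine (hWmem _).mpr ⟨g⁻¹ * v * g, hnorm v hv, ?_⟩
    group
  have hconjWg' : ∀ x ∈ W, g * x * g⁻¹ ∈ W := by
    intro x hx
    obtain ⟨v, hv, rfl⟩ := (hWmem x).mp hx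
    refine (hWmem _).mpr ⟨g * v * g⁻¹, hconj' v hv, ?_⟩
    group
  have hconjWz : ∀ (k : ℤ), ∀ x ∈ W, (g ^ k)⁻¹ * x * g ^ k ∈ W := by
    intro k
    induction k using Int.induction_on with
    | zero => intro x hx; simpa using hx
    | succ i ih =>
      intro x hx
      have heq : (g ^ ((i:ℤ)+1))⁻¹ * x * g ^ ((i:ℤ)+1)
          = g⁻¹ * ((g ^ (i:ℤ))⁻¹ * x * g ^ (i:ℤ)) * g := by
        rw [zpow_add_one]; group
      rw [heq]; exact hconjWg _ (ih x hx)
    | pred i ih =>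
      intro x hx
      have heq : (g ^ (-(i:ℤ)-1))⁻¹ * x * g ^ (-(i:ℤ)-1)
          = g * ((g ^ (-(i:ℤ)))⁻¹ * x * g ^ (-(i:ℤ))) * g⁻¹ := by
        rw [zpow_sub_one]; group
      rw [heq]; exact hconjWg' _ (ih x hx)
  -- every element of H has the form v * g^k
  have hHform : ∀ x ∈ H, ∃ v ∈ V, ∃ k : ℤ, x = v * g ^ k := by
    let S : Subgroup G :=
      { carrier := {x : G | ∃ v ∈ V, ∃ k : ℤ, x = v * g ^ k}
        one_mem' := ⟨1, V.one_mem, 0, by simp⟩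
        mul_mem' := by
          rintro a b ⟨v, hv, k, rfl⟩ ⟨w, hw, m, rfl⟩
          refine ⟨v * ((g ^ (-k))⁻¹ * w * g ^ (-k)), mul_mem hv (hVz (-k) w hw), k + m, ?_⟩
          group
        inv_mem' := by
          rintro a ⟨v, hv, k, rfl⟩
          exact ⟨(g ^ k)⁻¹ * v⁻¹ * g ^ k, hVz k _ (inv_mem hv), -k, by group⟩ }
    have hle : H ≤ S := by
      rw [hH]
      apply sup_le
      · intro v hv; exact ⟨v, hv, 0, by simp⟩
      · intro x hx
        obtain ⟨k, rfl⟩ := Subgroup.mem_zpowers_iff.mp hx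
        exact ⟨1, V.one_mem, k, by simp⟩
    exact fun x hx => hle hx
  -- the CommGroup structure on V and the norm argument
  letI : CommGroup ↥V :=
    { (inferInstance : Group ↥V) with
      mul_comm := fun a b => Subtype.ext (hab _ a.2 _ b.2) }
  set n := orderOf g with hndef
  have hgn : g ^ n = 1 := pow_orderOf_eq_one g
  set σ : ↥V → ↥V := fun v => ⟨g⁻¹ * ↑v * g, hnorm _ v.2⟩ with hσdef
  have hσval : ∀ (i : ℕ) (v : ↥V), (σ^[i] v : G) = (g ^ i)⁻¹ * ↑v * g ^ i := by
    intro i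
    induction i with
    | zero => intro v; simp
    | succ i ih =>
      intro v
      rw [Function.iterate_succ_apply']
      show g⁻¹ * ↑(σ^[i] v) * g = _
      rw [ih v, pow_succ]; group
  have hσn : ∀ v : ↥V, σ^[n] v = v := by
    intro v
    apply Subtype.ext
    rw [hσval, hgn]
    group
  have hσmul : ∀ a b : ↥V, σ (a * b) = σ a * σ b := fun a b =>
    Subtype.ext (by show g⁻¹ * (↑a * ↑b) * g = (g⁻¹ * ↑a * g) * (g⁻¹ * ↑b * g); group)
  have hσinv : ∀ v : ↥V, σ v⁻¹ = (σ v)⁻¹ := fun v =>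
    Subtype.ext (by show g⁻¹ * (↑v)⁻¹ * g = (g⁻¹ * ↑v * g)⁻¹; group)
  set fV : ↥V → ↥V := fun v => v⁻¹ * σ v with hfVdef
  have hσf : ∀ v : ↥V, σ (fV v) = fV (σ v) := by
    intro v
    show σ (v⁻¹ * σ v) = (σ v)⁻¹ * σ (σ v)
    rw [hσmul, hσinv]
  have hσiterf : ∀ (i : ℕ) (v : ↥V), σ^[i] (fV v) = fV (σ^[i] v) := by
    intro i
    induction i with
    | zero => intro v; rfl
    | succ i ih =>
      intro v
      rw [Function.iterate_succ_apply, hσf, ih, ← Function.iterate_succ_apply]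
  have hkey : ∀ v w : ↥V, σ w = w → w = fV v → w = 1 := by
    intro v w hσw hwv
    have h1 : ∏ i ∈ Finset.range n, σ^[i] w = w ^ n := by
      have hfix : ∀ i : ℕ, σ^[i] w = w := fun i => Function.iterate_fixed hσw i
      simp [hfix]
    have h2 : ∏ i ∈ Finset.range n, σ^[i] w = 1 := by
      rw [hwv]
      calc ∏ i ∈ Finset.range n, σ^[i] (fV v)
          = ∏ i ∈ Finset.range n, (σ^[i+1] v / σ^[i] v) := by
            apply Finset.prod_congr rfl
            intro i _
            rw [hσiterf i v]
            show (σ^[i] v)⁻¹ * σ (σ^[i] v) = _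
            rw [div_eq_mul_inv, Function.iterate_succ_apply' σ i v]
            exact mul_comm _ _
        _ = σ^[n] v / σ^[0] v := Finset.prod_range_div (fun i => σ^[i] v) n
        _ = 1 := by rw [hσn]; simp
    have h3 : w ^ n = 1 := by rw [← h1, h2]
    have h4 : orderOf w ∣ n := orderOf_dvd_of_pow_eq_one h3
    have h5 : orderOf w ∣ Nat.card ↥V := orderOf_dvd_natCard w
    have h6 : Nat.gcd (Nat.card ↥V) n = 1 := hcop
    have h7 : orderOf w ∣ 1 := h6 ▸ Nat.dvd_gcd h5 h4
    exact orderOf_eq_one_iff.mp (Nat.dvd_one.mp h7)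
  -- kernel of φ on W is trivial
  have hker : ∀ x ∈ W, x⁻¹ * g⁻¹ * x * g = 1 → x = 1 := by
    intro x hx h1
    obtain ⟨v, hv, hvx⟩ := (hWmem x).mp hx
    have hxV : x ∈ V := hWleV hx
    set w : ↥V := ⟨x, hxV⟩ with hwdef
    have hσw : σ w = w := by
      apply Subtype.ext
      show g⁻¹ * x * g = x
      conv_rhs => rw [← mul_one x, ← h1]
      group
    have hwf : w = fV ⟨v, hv⟩ := by
      apply Subtype.ext
      show x = v⁻¹ * (g⁻¹ * v * g)
      rw [hvx]; group
    have := hkey ⟨v, hv⟩ w hσw hwf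
    have hval : x = ((1 : ↥V) : G) := congrArg Subtype.val this
    simpa using hval
  -- φ is injective on W
  have hφinjW : ∀ a ∈ W, ∀ b ∈ W, a⁻¹ * g⁻¹ * a * g = b⁻¹ * g⁻¹ * b * g → a = b := by
    intro a ha b hb h
    have haV := hWleV ha
    have hbV := hWleV hb
    have hbinv : (b⁻¹)⁻¹ * g⁻¹ * b⁻¹ * g = (b⁻¹ * g⁻¹ * b * g)⁻¹ := by
      have h1 := hmul b hbV b⁻¹ (inv_mem hbV)
      rw [mul_inv_cancel] at h1
      have h2 : (1:G)⁻¹ * g⁻¹ * 1 * g = 1 := by group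
      rw [h2] at h1
      exact (inv_eq_of_mul_eq_one_right h1.symm).symm
    have hab1 : (a * b⁻¹)⁻¹ * g⁻¹ * (a * b⁻¹) * g = 1 := by
      rw [hmul a haV b⁻¹ (inv_mem hbV), hbinv, h, mul_inv_cancel]
    have := hker (a * b⁻¹) (mul_mem ha (inv_mem hb)) hab1
    exact mul_inv_eq_one.mp this
  -- φ maps W to W
  have hφWmap : ∀ x ∈ W, x⁻¹ * g⁻¹ * x * g ∈ W :=
    fun x hx => (hWmem _).mpr ⟨x, hWleV hx, rfl⟩
  -- the restriction of φ to W as a map of the subtype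
  set fW : ↥W → ↥W := fun y => ⟨(y:G)⁻¹ * g⁻¹ * y * g, hφWmap _ y.2⟩ with hfWdef
  have hfWinj : Function.Injective fW := by
    intro a b hh
    have h1 : (a:G)⁻¹ * g⁻¹ * a * g = (b:G)⁻¹ * g⁻¹ * b * g := congrArg Subtype.val hh
    exact Subtype.ext (hφinjW _ a.2 _ b.2 h1)
  have hfWval : ∀ (i : ℕ) (y : ↥W), ((fW^[i] y : ↥W) : G) = (fun z => engelComm z g)^[i] (y : G) := by
    intro i
    induction i with
    | zero => intro y; rfl
    | succ i ih =>
      intro y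
      rw [Function.iterate_succ_apply', Function.iterate_succ_apply']
      show ((fW^[i] y : ↥W) : G)⁻¹ * g⁻¹ * (fW^[i] y : ↥W) * g = _
      rw [ih y]
      rfl
  -- surjectivity of φ on W
  have hsurjW : ∀ x ∈ W, ∃ u ∈ W, u⁻¹ * g⁻¹ * u * g = x := by
    intro x hx
    obtain ⟨u, hu⟩ := Finite.injective_iff_surjective.mp hfWinj ⟨x, hx⟩
    exact ⟨u, u.2, congrArg Subtype.val hu⟩
  -- periodicity of φ on W
  have hper : ∀ x ∈ W, ∃ m, 1 ≤ m ∧ (fun y => engelComm y g)^[m] x = x := by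
    intro x hx
    obtain ⟨i, j, hij, hfij⟩ :=
      Finite.exists_ne_map_eq_of_infinite (fun i : ℕ => fW^[i] ⟨x, hx⟩)
    rcases Nat.lt_or_ge i j with hlt | hge
    · have h1 : fW^[i] (fW^[j-i] ⟨x, hx⟩) = fW^[i] ⟨x, hx⟩ := by
        rw [← Function.iterate_add_apply]
        rw [show i + (j - i) = j by omega]
        exact hfij.symm
      have h2 := (hfWinj.iterate i) h1
      refine ⟨j - i, by omega, ?_⟩
      have := congrArg Subtype.val h2
      rwa [hfWval] at this
    · have hlt : j < i := by omega
      have h1 : fW^[j] (fW^[i-j] ⟨x, hx⟩) = fW^[j] ⟨x, hx⟩ := by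
        rw [← Function.iterate_add_apply]
        rw [show j + (i - j) = i by omega]
        exact hfij
      have h2 := (hfWinj.iterate j) h1
      refine ⟨i - j, by omega, ?_⟩
      have := congrArg Subtype.val h2
      rwa [hfWval] at this
  -- iterates of φ preserve W
  have hiterW : ∀ (s : ℕ), ∀ x ∈ W, (fun y => engelComm y g)^[s] x ∈ W := by
    intro s
    induction s with
    | zero => intro x hx; simpa using hx
    | succ s ih =>
      intro x hx
      rw [Function.iterate_succ_apply]
      exact ih _ (hφWmap x hx)
  -- the first step lands in W
  have hstep_left : ∀ x ∈ H, engelComm x g ∈ W := by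
    intro x hx
    obtain ⟨v, hv, k, rfl⟩ := hHform x hx
    have h1 : engelComm (v * g ^ k) g = (g ^ k)⁻¹ * (v⁻¹ * g⁻¹ * v * g) * g ^ k := by
      show (v * g ^ k)⁻¹ * g⁻¹ * (v * g ^ k) * g = _
      group
    rw [h1]
    exact hconjWz k _ ((hWmem _).mpr ⟨v, hv, rfl⟩)
  have hVH : V ≤ H := by rw [hH]; exact le_sup_left
  -- ============ conclusion ============
  refine ⟨?_, ?_, ?_, ?_⟩
  · -- left sink
    intro x hx
    refine ⟨1, fun l hl => ?_⟩
    obtain ⟨s, rfl⟩ := Nat.exists_eq_add_of_le hl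
    rw [Nat.add_comm 1 s, Function.iterate_add_apply]
    simp only [Function.iterate_one]
    exact hiterW s _ (hstep_left x hx)
  · -- right sink
    intro x hx
    obtain ⟨v, hv, k, hxvk⟩ := hHform x hx
    have hstepr : ∀ y ∈ W, engelComm y x ∈ W := by
      intro y hy
      have hyV := hWleV hy
      have hcomm : v⁻¹ * y * v = y := by
        have h := hab y hyV v hv
        rw [show v⁻¹ * y * v = v⁻¹ * (y * v) by group, h]
        group
      have h1 : engelComm y x = y⁻¹ * ((g ^ k)⁻¹ * y * g ^ k) := by
        show y⁻¹ * x⁻¹ * y * x = _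
        rw [hxvk]
        calc y⁻¹ * (v * g ^ k)⁻¹ * y * (v * g ^ k)
            = y⁻¹ * (g ^ k)⁻¹ * (v⁻¹ * y * v) * g ^ k := by group
          _ = y⁻¹ * (g ^ k)⁻¹ * y * g ^ k := by rw [hcomm]
          _ = y⁻¹ * ((g ^ k)⁻¹ * y * g ^ k) := by group
      rw [h1]
      exact mul_mem (inv_mem hy) (hconjWz k y hy)
    have hfirst : engelComm g x ∈ W := by
      have h1 : engelComm g x = (g ^ k)⁻¹ * (v⁻¹ * g⁻¹ * v * g)⁻¹ * g ^ k := by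
        show g⁻¹ * x⁻¹ * g * x = _
        rw [hxvk]
        group
      rw [h1]
      exact hconjWz k _ (inv_mem ((hWmem _).mpr ⟨v, hv, rfl⟩))
    have hiterx : ∀ (s : ℕ), ∀ y ∈ W, (fun z => engelComm z x)^[s] y ∈ W := by
      intro s
      induction s with
      | zero => intro y hy; simpa using hy
      | succ s ih =>
        intro y hy
        rw [Function.iterate_succ_apply]
        exact ih _ (hstepr y hy)
    refine ⟨1, fun r hr => ?_⟩
    obtain ⟨s, rfl⟩ := Nat.exists_eq_add_of_le hr
    rw [Nat.add_comm 1 s, Function.iterate_add_apply]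
    simp only [Function.iterate_one]
    exact hiterx s _ hfirst
  · -- minimal left sink
    intro E hE w hw
    have hwW : w ∈ W := hw
    obtain ⟨l₀, hl₀⟩ := hE w (hVH (hWleV hwW))
    obtain ⟨m, hm1, hmx⟩ := hper w hwW
    have hml : ∀ k : ℕ, (fun y => engelComm y g)^[m * k] w = w := by
      intro k
      induction k with
      | zero => simp
      | succ k ih =>
        rw [Nat.mul_succ, Function.iterate_add_apply, hmx, ih]
    have hle : l₀ ≤ m * (l₀ + 1) := by nlinarith
    have := hl₀ (m * (l₀ + 1)) hle
    rwa [hml (l₀ + 1)] at this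
  · -- minimal right sink
    intro R hR w hw
    have hwW : w ∈ W := hw
    obtain ⟨u, huW, hu⟩ := hsurjW (g * w⁻¹ * g⁻¹) (hconjWg' _ (inv_mem hwW))
    have huV : u ∈ V := hWleV huW
    set x := u * g with hxdef
    have hxH : x ∈ H := by
      rw [hH]
      exact mul_mem (Subgroup.mem_sup_left huV)
        (Subgroup.mem_sup_right (Subgroup.mem_zpowers g))
    have hfirst : engelComm g x = w := by
      show g⁻¹ * x⁻¹ * g * x = w
      rw [hxdef]
      have h2 : g⁻¹ * (u * g)⁻¹ * g * (u * g) = g⁻¹ * (u⁻¹ * g⁻¹ * u * g)⁻¹ * g := by group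
      rw [h2, hu]
      group
    have hstepx : ∀ y ∈ W, engelComm y x = engelComm y g := by
      intro y hy
      have hyV := hWleV hy
      have hcomm : u⁻¹ * y * u = y := by
        have h := hab y hyV u huV
        rw [show u⁻¹ * y * u = u⁻¹ * (y * u) by group, h]
        group
      show y⁻¹ * x⁻¹ * y * x = y⁻¹ * g⁻¹ * y * g
      rw [hxdef]
      calc y⁻¹ * (u * g)⁻¹ * y * (u * g)
          = y⁻¹ * g⁻¹ * (u⁻¹ * y * u) * g := by group
        _ = y⁻¹ * g⁻¹ * y * g := by rw [hcomm]
    have hiterx : ∀ (s : ℕ), (fun z => engelComm z x)^[s] w ∈ W ∧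
        (fun z => engelComm z x)^[s] w = (fun z => engelComm z g)^[s] w := by
      intro s
      induction s with
      | zero => exact ⟨hwW, rfl⟩
      | succ s ih =>
        obtain ⟨ihW, ihE⟩ := ih
        simp only [Function.iterate_succ_apply']
        constructor
        · rw [hstepx _ ihW]
          exact hφWmap _ ihW
        · rw [hstepx _ ihW, ihE]
    obtain ⟨r₀, hr₀⟩ := hR x hxH
    obtain ⟨m, hm1, hmx⟩ := hper w hwW
    have hml : ∀ k : ℕ, (fun y => engelComm y g)^[m * k] w = w := by
      intro k
      induction k with
      | zero => simp
      | succ k ih =>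
        rw [Nat.mul_succ, Function.iterate_add_apply, hmx, ih]
    have hrge : r₀ ≤ m * (r₀ + 1) + 1 := by nlinarith
    have h := hr₀ (m * (r₀ + 1) + 1) hrge
    have hcalc : (fun y => engelComm y x)^[m * (r₀ + 1) + 1] g = w := by
      rw [Function.iterate_add_apply]
      simp only [Function.iterate_one]
      rw [hfirst, (hiterx (m * (r₀ + 1))).2, hml (r₀ + 1)]
    rwa [hcalc] at h
end

section
/- Let φ be an automorphism of a finite nilpotent group G with gcd(|φ|, |G|) = 1. Then every element g ∈ G can be written uniquely in the form g = c·u, where c ∈ C_G(φ) and u belongs to the set {v⁻¹·φ(v) : v ∈ G}. -/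
/-!
If `c * [v, φ] = c' * [w, φ]` with `c, c'` fixed by `φ`, then by induction on the nilpotency class
`c` and `c'` agree modulo `Z(G)`, and the central fixed point `z = c⁻¹ * c'` turns out to be the
commutator `[v * w⁻¹, φ]`. A fixed commutator `b = [x, φ]` satisfies `φ ^ i x = x * b ^ i`, so
`b ^ |φ| = 1` and coprimality forces `b = 1`; hence `c = c'`. Existence follows by counting: the
fibres of `v ↦ [v, φ]` are the right cosets of `C_G(φ)`, so `C_G(φ) × {[v, φ]}` has `|G|` elements.
-/

open Subgroup

theorem QuotientGroup.congr_pow_apply_mk {G : Type*} [Group G] {N : Subgroup G} [N.Normal]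
    {φ : G ≃* G} (hN : N.map (φ : G →* G) = N) (n : ℕ) (x : G) :
    (congr N N φ hN ^ n) (x : G ⧸ N) = ((φ ^ n) x : G) := by
  induction n with
  | zero => rfl
  | succ n ih => rw [pow_succ', MulAut.mul_apply, ih, pow_succ', MulAut.mul_apply]; rfl

theorem QuotientGroup.congr_pow_eq_one {G : Type*} [Group G] {N : Subgroup G} [N.Normal]
    {φ : G ≃* G} (hN : N.map (φ : G →* G) = N) {k : ℕ} (hk : φ ^ k = 1) :
    congr N N φ hN ^ k = 1 := by
  ext x
  induction x using QuotientGroup.induction_on with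
  | H x => rw [congr_pow_apply_mk, hk]; rfl

namespace MulEquiv

variable {G : Type*} [Group G] (φ : G ≃* G)

def fixedSubgroup : Subgroup G := (φ : G →* G).eqLocus (MonoidHom.id G)

variable {φ} in
theorem mem_fixedSubgroup {x : G} : x ∈ φ.fixedSubgroup ↔ φ x = x := Iff.rfl

theorem inv_mul_apply_eq_inv_mul_apply_iff {v w : G} :
    v⁻¹ * φ v = w⁻¹ * φ w ↔ w * v⁻¹ ∈ φ.fixedSubgroup := by
  rw [mem_fixedSubgroup, map_mul, map_inv, mul_inv_eq_iff_eq_mul, mul_assoc,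
    ← inv_mul_eq_iff_eq_mul, inv_inv, eq_comm]

theorem card_range_inv_mul_apply_mul_card_fixedSubgroup :
    Nat.card (Set.range fun v : G => v⁻¹ * φ v) * Nat.card φ.fixedSubgroup = Nat.card G := by
  have hker : Setoid.ker (fun v : G => v⁻¹ * φ v) = QuotientGroup.rightRel φ.fixedSubgroup := by
    ext v w
    rw [Setoid.ker_def, QuotientGroup.rightRel_apply, inv_mul_apply_eq_inv_mul_apply_iff]
  rw [← Nat.card_congr (Setoid.quotientKerEquivRange _), hker,
    Nat.card_congr (QuotientGroup.quotientRightRelEquivQuotientLeftRel _),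
    ← card_eq_card_quotient_mul_card_subgroup]

theorem pow_apply_eq_mul_pow_inv_mul_apply {v : G} (h : φ (v⁻¹ * φ v) = v⁻¹ * φ v) (n : ℕ) :
    (φ ^ n) v = v * (v⁻¹ * φ v) ^ n := by
  induction n with
  | zero => simp
  | succ n ih =>
    rw [pow_succ', MulAut.mul_apply, ih, map_mul, map_pow, h, pow_succ', ← mul_assoc,
      mul_inv_cancel_left]

theorem inv_mul_apply_eq_one_of_apply_eq {k : ℕ} (hk : φ ^ k = 1)
    (hcop : k.Coprime (Nat.card G)) {v : G} (h : φ (v⁻¹ * φ v) = v⁻¹ * φ v) :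
    v⁻¹ * φ v = 1 := by
  have hpow : (v⁻¹ * φ v) ^ k = 1 := by
    simpa [hk] using (φ.pow_apply_eq_mul_pow_inv_mul_apply h k).symm
  exact orderOf_eq_one_iff.mp <| Nat.eq_one_of_dvd_coprimes hcop
    (orderOf_dvd_of_pow_eq_one hpow) (orderOf_dvd_natCard _)

theorem inv_mul_eq_inv_mul_apply_of_mem_center {c c' v w : G} (hz : c⁻¹ * c' ∈ center G)
    (h : c * (v⁻¹ * φ v) = c' * (w⁻¹ * φ w)) :
    c⁻¹ * c' = (v * w⁻¹)⁻¹ * φ (v * w⁻¹) := by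
  have hv : v⁻¹ * φ v = c⁻¹ * c' * (w⁻¹ * φ w) := by
    rw [mul_assoc, ← h, inv_mul_cancel_left]
  calc c⁻¹ * c' = w * (c⁻¹ * c') * w⁻¹ := by rw [mem_center_iff.mp hz w, mul_inv_cancel_right]
    _ = w * (v⁻¹ * φ v) * (φ w)⁻¹ := by rw [hv]; group
    _ = (v * w⁻¹)⁻¹ * φ (v * w⁻¹) := by rw [map_mul, map_inv]; group

theorem eq_of_mul_inv_mul_apply_eq [Group.IsNilpotent G] {k : ℕ} (hk : φ ^ k = 1)
    (hcop : k.Coprime (Nat.card G)) {c c' v w : G} (hc : φ c = c) (hc' : φ c' = c')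
    (h : c * (v⁻¹ * φ v) = c' * (w⁻¹ * φ w)) : c = c' := by
  refine Group.nilpotent_center_quotient_ind
    (P := fun G _ _ => ∀ (φ : G ≃* G) {k : ℕ}, φ ^ k = 1 → k.Coprime (Nat.card G) →
      ∀ {c c' v w : G}, φ c = c → φ c' = c' → c * (v⁻¹ * φ v) = c' * (w⁻¹ * φ w) → c = c')
    G ?_ ?_ φ hk hcop hc hc' h
  · intro G _ _ _ _ _ _ c c' _ _ _ _ _
    exact Subsingleton.elim c c'
  intro G _ _ ih φ k hk hcop c c' v w hc hc' h
  have hZ : (center G).map (φ : G →* G) = center G := characteristic_iff_map_eq.mp inferInstance φ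
  have hZc : c⁻¹ * c' ∈ center G := QuotientGroup.eq.mp <|
    ih (QuotientGroup.congr _ _ φ hZ) (QuotientGroup.congr_pow_eq_one hZ hk)
      (hcop.coprime_dvd_right (card_quotient_dvd_card _)) (v := v) (w := w)
      (congrArg _ hc) (congrArg _ hc') (congrArg ((↑) : G → G ⧸ center G) h)
  rw [← inv_mul_eq_one, inv_mul_eq_inv_mul_apply_of_mem_center φ hZc h]
  apply inv_mul_apply_eq_one_of_apply_eq φ hk hcop
  rw [← inv_mul_eq_inv_mul_apply_of_mem_center φ hZc h, map_mul, map_inv, hc, hc']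

theorem exists_eq_mul_inv_mul_apply [Finite G] [Group.IsNilpotent G] {k : ℕ} (hk : φ ^ k = 1)
    (hcop : k.Coprime (Nat.card G)) (g : G) : ∃ c v : G, φ c = c ∧ g = c * (v⁻¹ * φ v) := by
  let μ : φ.fixedSubgroup × Set.range (fun v : G => v⁻¹ * φ v) → G := fun p => p.1 * p.2
  have hμ : μ.Injective := by
    rintro ⟨⟨c, hc⟩, ⟨_, v, rfl⟩⟩ ⟨⟨c', hc'⟩, ⟨_, w, rfl⟩⟩ h
    obtain rfl := φ.eq_of_mul_inv_mul_apply_eq hk hcop hc hc' h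
    exact Prod.ext rfl (Subtype.ext (mul_left_cancel h))
  have hcard : Nat.card (φ.fixedSubgroup × Set.range (fun v : G => v⁻¹ * φ v)) = Nat.card G := by
    rw [Nat.card_prod, mul_comm, card_range_inv_mul_apply_mul_card_fixedSubgroup]
  obtain ⟨⟨⟨c, hc⟩, ⟨_, v, rfl⟩⟩, hg⟩ :=
    ((Nat.bijective_iff_injective_and_card μ).2 ⟨hμ, hcard⟩).surjective g
  exact ⟨c, v, hc, hg.symm⟩

end MulEquiv

theorem stmt16 (G : Type*) [Group G] [Finite G] [Group.IsNilpotent G]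
    (φ : G ≃* G) (hcop : Nat.Coprime (orderOf φ) (Nat.card G)) (g : G) :
    ∃! cu : G × G, φ cu.1 = cu.1 ∧ (∃ v : G, cu.2 = v⁻¹ * φ v) ∧ g = cu.1 * cu.2 := by
  have hk := pow_orderOf_eq_one φ
  obtain ⟨c, v, hc, hg⟩ := φ.exists_eq_mul_inv_mul_apply hk hcop g
  refine ⟨(c, v⁻¹ * φ v), ⟨hc, ⟨v, rfl⟩, hg⟩, ?_⟩
  rintro ⟨c', _⟩ ⟨hc', ⟨w, rfl⟩, hg'⟩
  obtain rfl := φ.eq_of_mul_inv_mul_apply_eq hk hcop hc' hc (hg'.symm.trans hg)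
  exact Prod.ext rfl (mul_left_cancel (hg'.symm.trans hg))
end
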